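/- The linear map φ : ℂ⁸ → M₂(ℂ) × M₂(ℂ) given by φ(x₁,…,x₄,y₁,…,y₄) = ( !![y₃,−y₄; x₂,−x₁], !![y₁,−y₂; −x₄,x₃] ) is a linear isomorphism onto M₂(ℂ) × M₂(ℂ), and it maps Y bijectively onto Z; that is, for every (x,y) ∈ ℂ⁸ one has (x,y) ∈ Y if and only if φ(x,y) ∈ Z. -/

import Mathlib

/-!
A 4×2 matrix has rank at most one iff its two columns admit a nontrivial kernel vector, iff
all its 2×2 minors vanish. The six minors of `A₁` and the six of `A₂` share two, leaving ten
quadrics in `(x, y)`. At `B = φ(x, y)` the ten scalar equations defining `Z` (two determinants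
and the entries of `B₁ J B₂ᵀ` and `B₂ᵀ T B₁`) are eight of these quadrics up to sign, plus
`x₁y₁ = x₄y₄` and `x₂y₂ = x₃y₃`, which modulo those eight are equivalent to the remaining
two minors; so the two systems cut out the same set.
-/

open Matrix

/-- The 4×2 matrix `A₁(x,y)` with rows `(x₁,x₂), (x₃,x₄), (y₂,y₁), (y₄,y₃)`. -/
def A1 (x₁ x₂ x₃ x₄ y₁ y₂ y₃ y₄ : ℂ) : Matrix (Fin 4) (Fin 2) ℂ :=
  !![x₁, x₂; x₃, x₄; y₂, y₁; y₄, y₃]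

/-- The 4×2 matrix `A₂(x,y)` with rows `(x₁,x₃), (x₂,x₄), (y₃,y₁), (y₄,y₂)`. -/
def A2 (x₁ x₂ x₃ x₄ y₁ y₂ y₃ y₄ : ℂ) : Matrix (Fin 4) (Fin 2) ℂ :=
  !![x₁, x₃; x₂, x₄; y₃, y₁; y₄, y₂]

/-- The matrix `J = !![0,-1; 1,0]`. -/
def MJ : Matrix (Fin 2) (Fin 2) ℂ := !![0, -1; 1, 0]

/-- The matrix `T = !![0,1; 1,0]`. -/
def MT : Matrix (Fin 2) (Fin 2) ℂ := !![0, 1; 1, 0]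

/-- The variety `Z` of pairs of 2×2 matrices. -/
def Z : Set (Matrix (Fin 2) (Fin 2) ℂ × Matrix (Fin 2) (Fin 2) ℂ) :=
  {p | p.1.det = 0 ∧ p.2.det = 0 ∧ p.1 * MJ * p.2ᵀ = 0 ∧ p.2ᵀ * MT * p.1 = 0}

/-- The map `φ : ℂ⁸ → M₂(ℂ) × M₂(ℂ)`. -/
def phi : (ℂ × ℂ × ℂ × ℂ) × (ℂ × ℂ × ℂ × ℂ) →
    Matrix (Fin 2) (Fin 2) ℂ × Matrix (Fin 2) (Fin 2) ℂ :=
  fun p =>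
    match p with
    | ((x₁, x₂, x₃, x₄), (y₁, y₂, y₃, y₄)) =>
      (!![y₃, -y₄; x₂, -x₁], !![y₁, -y₂; -x₄, x₃])

namespace Matrix

variable {K m : Type*} [Field K]

theorem rank_lt_card_width_iff {n : Type*} [Fintype m] [Fintype n] (M : Matrix m n K) :
    M.rank < Fintype.card n ↔ ∃ v ≠ 0, M *ᵥ v = 0 := by
  have hrn := LinearMap.finrank_range_add_finrank_ker M.mulVecLin
  rw [Module.finrank_fintype_fun_eq_card] at hrn
  calc M.rank < Fintype.card n ↔ Module.finrank K (LinearMap.ker M.mulVecLin) ≠ 0 := by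
        rw [Matrix.rank]; omega
    _ ↔ ∃ v ≠ 0, M *ᵥ v = 0 := by
        simp [Submodule.finrank_eq_zero, Submodule.ne_bot_iff, and_comm]

theorem exists_mulVec_eq_zero_iff_minors_vanish (M : Matrix m (Fin 2) K) :
    (∃ v ≠ 0, M *ᵥ v = 0) ↔ ∀ i j, M i 0 * M j 1 = M i 1 * M j 0 := by
  constructor
  · rintro ⟨v, hv0, hv⟩ i j
    have hrow : ∀ k, M k 0 * v 0 + M k 1 * v 1 = 0 := fun k => by
      simpa [mulVec, dotProduct, Fin.sum_univ_two] using congrFun hv k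
    have hv' : v 0 ≠ 0 ∨ v 1 ≠ 0 := by
      by_contra! h
      exact hv0 (funext fun k => by fin_cases k <;> simp [h])
    rcases hv' with h0 | h1
    · exact mul_left_cancel₀ h0 (by linear_combination M j 1 * hrow i - M i 1 * hrow j)
    · exact mul_left_cancel₀ h1 (by linear_combination M i 0 * hrow j - M j 0 * hrow i)
  · intro h
    by_cases hM : M = 0
    · exact ⟨![1, 0], by simp, by simp [hM]⟩
    obtain ⟨i, k, hik⟩ : ∃ i k, M i k ≠ 0 := by
      by_contra! h'
      exact hM (Matrix.ext h')
    refine ⟨![M i 1, -M i 0], fun hv => hik ?_, funext fun j => ?_⟩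
    · fin_cases k
      · simpa using congrFun hv 1
      · simpa using congrFun hv 0
    · simp [mulVec, dotProduct, Fin.sum_univ_two]
      linear_combination h j i

theorem rank_le_one_iff_minors_vanish [Fintype m] (M : Matrix m (Fin 2) K) :
    M.rank ≤ 1 ↔ ∀ i j, M i 0 * M j 1 = M i 1 * M j 0 := by
  rw [← exists_mulVec_eq_zero_iff_minors_vanish, ← M.rank_lt_card_width_iff, Fintype.card_fin,
    Nat.lt_succ_iff]

theorem minors_vanish_iff_of_lt {R : Type*} [CommRing R] [LinearOrder m]
    (M : Matrix m (Fin 2) R) :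
    (∀ i j, M i 0 * M j 1 = M i 1 * M j 0) ↔ ∀ i j, i < j → M i 0 * M j 1 = M i 1 * M j 0 := by
  refine ⟨fun h i j _ => h i j, fun h i j => ?_⟩
  rcases lt_trichotomy i j with hij | rfl | hji
  · exact h i j hij
  · ring
  · linear_combination -h j i hji

end Matrix

theorem rank_A1_le_one_iff (x₁ x₂ x₃ x₄ y₁ y₂ y₃ y₄ : ℂ) :
    (A1 x₁ x₂ x₃ x₄ y₁ y₂ y₃ y₄).rank ≤ 1 ↔
      x₁ * x₄ = x₂ * x₃ ∧ x₁ * y₁ = x₂ * y₂ ∧ x₁ * y₃ = x₂ * y₄ ∧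
        x₃ * y₁ = x₄ * y₂ ∧ x₃ * y₃ = x₄ * y₄ ∧ y₂ * y₃ = y₁ * y₄ := by
  rw [rank_le_one_iff_minors_vanish, minors_vanish_iff_of_lt]
  simp [Fin.forall_fin_succ, A1, and_assoc]

theorem rank_A2_le_one_iff (x₁ x₂ x₃ x₄ y₁ y₂ y₃ y₄ : ℂ) :
    (A2 x₁ x₂ x₃ x₄ y₁ y₂ y₃ y₄).rank ≤ 1 ↔
      x₁ * x₄ = x₃ * x₂ ∧ x₁ * y₁ = x₃ * y₃ ∧ x₁ * y₂ = x₃ * y₄ ∧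
        x₂ * y₁ = x₄ * y₃ ∧ x₂ * y₂ = x₄ * y₄ ∧ y₃ * y₂ = y₁ * y₄ := by
  rw [rank_le_one_iff_minors_vanish, minors_vanish_iff_of_lt]
  simp [Fin.forall_fin_succ, A2, and_assoc]

theorem phi_mem_Z_iff (x₁ x₂ x₃ x₄ y₁ y₂ y₃ y₄ : ℂ) :
    phi ((x₁, x₂, x₃, x₄), (y₁, y₂, y₃, y₄)) ∈ Z ↔
      x₁ * y₃ = x₂ * y₄ ∧ x₃ * y₁ = x₄ * y₂ ∧
        (y₂ * y₃ = y₁ * y₄ ∧ x₃ * y₃ = x₄ * y₄ ∧ x₁ * y₁ = x₂ * y₂ ∧ x₁ * x₄ = x₂ * x₃) ∧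
        (x₂ * y₁ = x₄ * y₃ ∧ x₁ * y₁ = x₄ * y₄ ∧ x₂ * y₂ = x₃ * y₃ ∧ x₁ * y₂ = x₃ * y₄) := by
  have hT : (!![y₁, -y₂; -x₄, x₃])ᵀ = !![y₁, -x₄; -y₂, x₃] := (Matrix.transposeᵣ_eq _).symm
  simp only [Z, phi, MJ, MT, Set.mem_ofPred_eq, hT, det_fin_two_of, mul_fin_two,
    ← Matrix.ext_iff, Fin.forall_fin_two, of_apply, cons_val', cons_val_zero, cons_val_one,
    empty_val', cons_val_fin_one, Matrix.zero_apply]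
  grind

def phiLinearEquiv :
    ((ℂ × ℂ × ℂ × ℂ) × (ℂ × ℂ × ℂ × ℂ)) ≃ₗ[ℂ]
      Matrix (Fin 2) (Fin 2) ℂ × Matrix (Fin 2) (Fin 2) ℂ where
  toFun := phi
  invFun B := ((-B.1 1 1, B.1 1 0, B.2 1 1, -B.2 1 0), (B.2 0 0, -B.2 0 1, B.1 0 0, -B.1 0 1))
  map_add' _ _ := by
    ext i j <;> fin_cases i <;> fin_cases j <;> simp [phi] <;> ring
  map_smul' _ _ := by
    ext i j <;> fin_cases i <;> fin_cases j <;> simp [phi]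
  left_inv _ := by simp [phi]
  right_inv B := by
    ext i j <;> fin_cases i <;> fin_cases j <;> simp [phi]

theorem stmt1 :
    IsLinearMap ℂ phi ∧ Function.Bijective phi ∧
      ∀ x₁ x₂ x₃ x₄ y₁ y₂ y₃ y₄ : ℂ,
        ((A1 x₁ x₂ x₃ x₄ y₁ y₂ y₃ y₄).rank ≤ 1 ∧ (A2 x₁ x₂ x₃ x₄ y₁ y₂ y₃ y₄).rank ≤ 1) ↔
          phi ((x₁, x₂, x₃, x₄), (y₁, y₂, y₃, y₄)) ∈ Z := by
  refine ⟨phiLinearEquiv.toLinearMap.isLinear, phiLinearEquiv.bijective,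
    fun x₁ x₂ x₃ x₄ y₁ y₂ y₃ y₄ => ?_⟩
  rw [rank_A1_le_one_iff, rank_A2_le_one_iff, phi_mem_Z_iff]
  constructor
  · rintro ⟨⟨h01, h02, h03, h12, h13, h23⟩, -, k02, k03, k12, -, -⟩
    exact ⟨h03, h12, ⟨h23, h13, h02, h01⟩, k12, by linear_combination k02 + h13,
      by linear_combination k02 - h02, k03⟩
  · rintro ⟨h03, h12, ⟨h23, h13, h02, h01⟩, k12, hx₁y₁, hx₂y₂, k03⟩
    exact ⟨⟨h01, h02, h03, h12, h13, h23⟩, by linear_combination h01,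
      by linear_combination h02 + hx₂y₂, k03, k12, by linear_combination hx₁y₁ - h02,
      by linear_combination h23⟩
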